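/- For every real r ≥ 0, one has e^{−N r²} e_N(N r²) → 𝟙_{r<1} + (1/2)·𝟙_{r=1} as N → ∞. In particular, e^{−N} ∑_{ℓ=0}^{N−1} N^ℓ/ℓ! → 1/2 as N → ∞. -/

import Mathlib

open Filter

/-- Truncated exponential series `e_N(t) = ∑_{ℓ=0}^{N-1} tˡ/ℓ!`. -/
noncomputable def eN (N : ℕ) (t : ℝ) : ℝ := ∑ ℓ ∈ Finset.range N, t ^ ℓ / (Nat.factorial ℓ)

/-!
Write `x = r²`. Off the critical point compare termwise with `x = 1`: `(Nx)^ℓ ≤ x^N N^ℓ` for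
`ℓ < N` when `x > 1`, and for `ℓ ≥ N` when `x < 1`. Hence the truncated sum (for `x > 1`), resp. the
tail of the exponential series (for `x < 1`), is at most `e^{-Nx} x^N e^N = (x e^{1-x})^N`, which
decays geometrically since `x e^{1-x} < 1` for `x ≠ 1`.

At `x = 1`, `e^{-N} e_N(N) = ∫_N^∞ t^{N-1} e^{-t} dt / (N-1)!`. The substitution `t = N + √N s`
turns the integral into `√N N^{N-1} e^{-N}` times an integral whose integrand tends to `e^{-s²/2}`
under a uniform exponential bound (Laplace's method), so it tends to `√(π/2)`; Stirling's formula
for `(N-1)!` then gives the limit `1/2`.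
-/

open Real MeasureTheory Set Topology Nat

lemma eN_nonneg (N : ℕ) {t : ℝ} (ht : 0 ≤ t) : 0 ≤ eN N t := by
  unfold eN; positivity

lemma eN_le_exp (N : ℕ) {t : ℝ} (ht : 0 ≤ t) : eN N t ≤ exp t :=
  sum_le_exp_of_nonneg ht N

lemma hasSum_pow_div_factorial_add (N : ℕ) (t : ℝ) :
    HasSum (fun k ↦ t ^ (k + N) / (k + N)!) (exp t - eN N t) := by
  refine (hasSum_nat_add_iff' N).mpr ?_
  rw [exp_eq_exp_ℝ]
  exact NormedSpace.expSeries_div_hasSum_exp t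

lemma eN_mul_le_pow_mul_eN (N : ℕ) {t x : ℝ} (ht : 0 ≤ t) (hx : 1 ≤ x) :
    eN N (t * x) ≤ x ^ N * eN N t := by
  rw [eN, eN, Finset.mul_sum]
  refine Finset.sum_le_sum fun ℓ hℓ ↦ ?_
  have := pow_le_pow_right₀ hx (Finset.mem_range.mp hℓ).le
  rw [mul_pow, mul_div_assoc', mul_comm (x ^ N)]
  gcongr

lemma exp_mul_sub_eN_mul_le (N : ℕ) {t x : ℝ} (ht : 0 ≤ t) (hx₀ : 0 ≤ x) (hx₁ : x ≤ 1) :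
    exp (t * x) - eN N (t * x) ≤ x ^ N * (exp t - eN N t) := by
  refine hasSum_le (fun k ↦ ?_) (hasSum_pow_div_factorial_add N (t * x))
    ((hasSum_pow_div_factorial_add N t).mul_left (x ^ N))
  have := pow_le_pow_of_le_one hx₀ hx₁ (Nat.le_add_left N k)
  rw [mul_pow, mul_div_assoc', mul_comm (x ^ N)]
  gcongr

lemma hasDerivAt_eN_succ (n : ℕ) (t : ℝ) : HasDerivAt (eN (n + 1)) (eN n t) t := by
  induction n with
  | zero =>
    have h : eN 1 = fun _ ↦ 1 := by ext; simp [eN]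
    simpa [h, eN] using hasDerivAt_const t (1 : ℝ)
  | succ n ih =>
    have h : HasDerivAt (fun x ↦ x ^ (n + 1) / ((n + 1)! : ℝ)) (t ^ n / n !) t := by
      refine ((hasDerivAt_pow (n + 1) t).div_const ((n + 1)! : ℝ)).congr_deriv ?_
      rw [Nat.factorial_succ]
      push_cast
      field_simp
    have hsum : eN (n + 1 + 1) = fun x ↦ eN (n + 1) x + x ^ (n + 1) / ((n + 1)! : ℝ) := by
      ext x; exact Finset.sum_range_succ _ (n + 1)
    rw [hsum]
    exact (ih.add h).congr_deriv (Finset.sum_range_succ _ n).symm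

lemma hasDerivAt_neg_exp_neg_mul_eN_succ (n : ℕ) (t : ℝ) :
    HasDerivAt (fun x ↦ -(exp (-x) * eN (n + 1) x)) (t ^ n * exp (-t) / n !) t := by
  have h := (((hasDerivAt_neg t).exp).mul (hasDerivAt_eN_succ n t)).neg
  refine h.congr_deriv ?_
  simp only [eN, Finset.sum_range_succ]
  ring

lemma tendsto_exp_neg_mul_eN_atTop (n : ℕ) :
    Tendsto (fun x ↦ exp (-x) * eN n x) atTop (𝓝 0) := by
  have h : Tendsto (fun x ↦ ∑ ℓ ∈ Finset.range n, x ^ ℓ * exp (-x) / ℓ !) atTop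
      (𝓝 (∑ ℓ ∈ Finset.range n, 0)) :=
    tendsto_finsetSum _ fun ℓ _ ↦ by
      simpa using (tendsto_pow_mul_exp_neg_atTop_nhds_zero ℓ).div_const (ℓ ! : ℝ)
  rw [Finset.sum_const_zero] at h
  refine h.congr fun x ↦ ?_
  rw [eN, Finset.mul_sum]
  exact Finset.sum_congr rfl fun ℓ _ ↦ by ring

lemma integral_Ioi_pow_mul_exp_neg_div_factorial (n : ℕ) {a : ℝ} (ha : 0 ≤ a) :
    ∫ t in Ioi a, t ^ n * exp (-t) / n ! = exp (-a) * eN (n + 1) a := by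
  rw [integral_Ioi_of_hasDerivAt_of_nonneg' (fun t _ ↦ hasDerivAt_neg_exp_neg_mul_eN_succ n t)
    (fun t ht ↦ by have : 0 ≤ t := ha.trans (le_of_lt ht); positivity)
    (by simpa using (tendsto_exp_neg_mul_eN_atTop (n + 1)).neg)]
  ring

lemma mul_exp_one_sub_lt_one {x : ℝ} (hx : x ≠ 1) : x * exp (1 - x) < 1 := by
  have h := add_one_lt_exp (sub_ne_zero.mpr hx)
  calc x * exp (1 - x) < exp (x - 1) * exp (1 - x) := by gcongr; linarith
    _ = 1 := by rw [← exp_add]; simp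

lemma exp_neg_mul_mul_pow_mul_exp (N : ℕ) (x : ℝ) :
    exp (-(N * x)) * (x ^ N * exp N) = (x * exp (1 - x)) ^ N := by
  rw [mul_pow, ← exp_nat_mul, mul_left_comm, ← exp_add]
  ring_nf

lemma tendsto_mul_exp_one_sub_pow {x : ℝ} (hx₀ : 0 ≤ x) (hx : x ≠ 1) :
    Tendsto (fun N : ℕ ↦ (x * exp (1 - x)) ^ N) atTop (𝓝 0) :=
  tendsto_pow_atTop_nhds_zero_of_lt_one (by positivity) (mul_exp_one_sub_lt_one hx)

lemma tendsto_exp_neg_mul_eN_of_one_lt {x : ℝ} (hx : 1 < x) :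
    Tendsto (fun N : ℕ ↦ exp (-N * x) * eN N (N * x)) atTop (𝓝 0) := by
  refine squeeze_zero (fun N ↦ ?_) (fun N ↦ ?_) (tendsto_mul_exp_one_sub_pow (by linarith) hx.ne')
  · have := eN_nonneg N (t := N * x) (by positivity)
    positivity
  · rw [← exp_neg_mul_mul_pow_mul_exp, neg_mul]
    gcongr
    calc eN N (N * x) ≤ x ^ N * eN N N := eN_mul_le_pow_mul_eN N N.cast_nonneg hx.le
      _ ≤ x ^ N * exp N := by gcongr; exact eN_le_exp N N.cast_nonneg

lemma tendsto_exp_neg_mul_eN_of_lt_one {x : ℝ} (hx₀ : 0 ≤ x) (hx : x < 1) :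
    Tendsto (fun N : ℕ ↦ exp (-N * x) * eN N (N * x)) atTop (𝓝 1) := by
  have tail (N : ℕ) : 1 - exp (-N * x) * eN N (N * x) ≤ (x * exp (1 - x)) ^ N := by
    have h1 := exp_mul_sub_eN_mul_le N N.cast_nonneg hx₀ hx.le
    have h2 : 0 ≤ x ^ N * eN N N := mul_nonneg (pow_nonneg hx₀ N) (eN_nonneg N N.cast_nonneg)
    rw [← exp_neg_mul_mul_pow_mul_exp]
    calc 1 - exp (-N * x) * eN N (N * x) = exp (-(N * x)) * (exp (N * x) - eN N (N * x)) := by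
          rw [mul_sub, ← exp_add, neg_mul]; simp
      _ ≤ exp (-(N * x)) * (x ^ N * exp N) := by gcongr; linarith
  have h := (tendsto_mul_exp_one_sub_pow hx₀ hx.ne).const_sub 1
  rw [sub_zero] at h
  refine tendsto_of_tendsto_of_tendsto_of_le_of_le h tendsto_const_nhds (fun N ↦ ?_) (fun N ↦ ?_)
  · linarith [tail N]
  · calc exp (-N * x) * eN N (N * x) ≤ exp (-N * x) * exp (N * x) := by
          gcongr; exact eN_le_exp N (by positivity)
      _ = 1 := by rw [← exp_add]; simp

lemma sq_div_two_mul_one_add_le_sub_log_one_add {v : ℝ} (hv : 0 ≤ v) :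
    v ^ 2 / (2 * (1 + v)) ≤ v - log (1 + v) := by
  have hpos : 0 < 1 + v := by linarith
  have h := self_le_sinh_iff.mpr (log_nonneg (by linarith : (1 : ℝ) ≤ 1 + v))
  rw [sinh_log hpos] at h
  have e : ((1 + v) - (1 + v)⁻¹) / 2 = v - v ^ 2 / (2 * (1 + v)) := by field_simp; ring
  linarith

lemma sub_log_one_add_le_sq_div_two {v : ℝ} (hv : 0 ≤ v) : v - log (1 + v) ≤ v ^ 2 / 2 := by
  have h := le_log_one_add_of_nonneg hv
  have e : v - v ^ 2 / 2 ≤ 2 * v / (v + 2) := by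
    rw [le_div_iff₀ (by linarith)]; nlinarith [pow_nonneg hv 3]
  linarith

lemma integral_comp_add_right_Ioi {E : Type*} [NormedAddCommGroup E] [NormedSpace ℝ E]
    (g : ℝ → E) (a c : ℝ) : ∫ x in Ioi a, g (x + c) = ∫ x in Ioi (a + c), g x := by
  rw [← (measurePreserving_add_right volume c).setIntegral_image_emb
    (measurableEmbedding_addRight c), image_add_const_Ioi]

lemma integral_Ioi_pow_mul_exp_neg_eq (m : ℕ) {c : ℝ} (hc : 0 < c) :
    ∫ t in Ioi c, t ^ m * exp (-t)
      = √c * c ^ m * exp (-c) * ∫ s in Ioi 0, (1 + s / √c) ^ m * exp (-(√c * s)) := by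
  have hsqrt : 0 < √c := sqrt_pos.mpr hc
  have shift := integral_comp_add_right_Ioi (fun t ↦ t ^ m * exp (-t)) 0 c
  have scale := integral_comp_mul_left_Ioi' (fun x ↦ (x + c) ^ m * exp (-(x + c))) 0 hsqrt
  rw [zero_add] at shift
  rw [mul_zero, smul_eq_mul, shift] at scale
  rw [← scale, ← integral_const_mul, ← integral_const_mul]
  refine setIntegral_congr_fun (measurableSet_Ioi (a := (0 : ℝ))) fun s _ ↦ ?_
  have hc' : √c * s + c = c * (1 + s / √c) := by
    field_simp; linear_combination s * mul_self_sqrt hc.le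
  rw [hc', mul_pow, show -(c * (1 + s / √c)) = -c + -(√c * s) by rw [← hc']; ring, exp_add]
  ring

/-- `t ↦ t ^ (n - 1) * exp (-t)` at `t = n + √n * s`, divided by its value at `t = n`. -/
noncomputable def rescaledGammaDensity (n : ℕ) (s : ℝ) : ℝ :=
  (1 + s / √n) ^ (n - 1) * exp (-(√n * s))

section rescaledGammaDensity

variable {n : ℕ} {s : ℝ}

lemma rescaledGammaDensity_eq (hn : n ≠ 0) (hs : 0 ≤ s) :
    rescaledGammaDensity n s = exp (-(n * (s / √n - log (1 + s / √n)))) / (1 + s / √n) := by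
  have hv : 0 < 1 + s / √n := by positivity
  have hsqrt : √n * s = n * (s / √n) := by
    field_simp; rw [sq_sqrt n.cast_nonneg]; ring
  rw [rescaledGammaDensity, pow_sub₀ _ hv.ne' (Nat.one_le_iff_ne_zero.mpr hn), pow_one,
    ← exp_log (pow_pos hv n), Real.log_pow, hsqrt, div_eq_mul_inv, mul_right_comm, ← exp_add]
  ring_nf

lemma sq_div_le_mul_sub_log (hn : n ≠ 0) (hs : 0 ≤ s) :
    s ^ 2 / (2 * (1 + s / √n)) ≤ n * (s / √n - log (1 + s / √n)) := by
  have hsq : (n : ℝ) * (s / √n) ^ 2 = s ^ 2 := by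
    rw [div_pow, sq_sqrt n.cast_nonneg]; field_simp
  calc s ^ 2 / (2 * (1 + s / √n)) = n * ((s / √n) ^ 2 / (2 * (1 + s / √n))) := by
        rw [← hsq]; ring
    _ ≤ n * (s / √n - log (1 + s / √n)) := by
        gcongr; exact sq_div_two_mul_one_add_le_sub_log_one_add (by positivity)

lemma mul_sub_log_le_sq_div_two (hn : n ≠ 0) (hs : 0 ≤ s) :
    n * (s / √n - log (1 + s / √n)) ≤ s ^ 2 / 2 := by
  have hsq : (n : ℝ) * (s / √n) ^ 2 = s ^ 2 := by
    rw [div_pow, sq_sqrt n.cast_nonneg]; field_simp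
  calc n * (s / √n - log (1 + s / √n)) ≤ n * ((s / √n) ^ 2 / 2) := by
        gcongr; exact sub_log_one_add_le_sq_div_two (by positivity)
    _ = s ^ 2 / 2 := by rw [← hsq]; ring

lemma rescaledGammaDensity_le (hn : n ≠ 0) (hs : 0 ≤ s) :
    rescaledGammaDensity n s ≤ exp (1 / 2) * exp (-(1 / 2) * s) := by
  have hsqrt : 1 ≤ √n := one_le_sqrt.mpr (by exact_mod_cast Nat.one_le_iff_ne_zero.mpr hn)
  have hv : s / √n ≤ s := div_le_self hs hsqrt
  have hexp : s ^ 2 / (2 * (1 + s)) ≤ n * (s / √n - log (1 + s / √n)) :=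
    calc s ^ 2 / (2 * (1 + s)) ≤ s ^ 2 / (2 * (1 + s / √n)) := by gcongr
      _ ≤ _ := sq_div_le_mul_sub_log hn hs
  have hlin : (s - 1) / 2 ≤ s ^ 2 / (2 * (1 + s)) := by
    rw [div_le_div_iff₀ (by norm_num) (by positivity)]; nlinarith
  rw [rescaledGammaDensity_eq hn hs, ← exp_add]
  calc exp (-(n * (s / √n - log (1 + s / √n)))) / (1 + s / √n)
      ≤ exp (-(n * (s / √n - log (1 + s / √n)))) :=
        div_le_self (exp_pos _).le (by linarith [div_nonneg hs (sqrt_nonneg n)])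
    _ ≤ exp (1 / 2 + -(1 / 2) * s) := by gcongr; linarith

lemma tendsto_rescaledGammaDensity (hs : 0 ≤ s) :
    Tendsto (fun n ↦ rescaledGammaDensity n s) atTop (𝓝 (exp (-(1 / 2) * s ^ 2))) := by
  have hv : Tendsto (fun n : ℕ ↦ s / √n) atTop (𝓝 0) :=
    tendsto_const_nhds.div_atTop (tendsto_sqrt_atTop.comp tendsto_natCast_atTop_atTop)
  have hlow : Tendsto (fun n : ℕ ↦ s ^ 2 / (2 * (1 + s / √n))) atTop (𝓝 (s ^ 2 / (2 * (1 + 0)))) :=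
    tendsto_const_nhds.div ((hv.const_add 1).const_mul 2) (by norm_num)
  rw [add_zero, mul_one] at hlow
  have hexp : Tendsto (fun n : ℕ ↦ n * (s / √n - log (1 + s / √n))) atTop (𝓝 (s ^ 2 / 2)) :=
    tendsto_of_tendsto_of_tendsto_of_le_of_le' hlow tendsto_const_nhds
      (eventually_ne_atTop 0 |>.mono fun n hn ↦ sq_div_le_mul_sub_log hn hs)
      (eventually_ne_atTop 0 |>.mono fun n hn ↦ mul_sub_log_le_sq_div_two hn hs)
  have h : Tendsto (fun n : ℕ ↦ exp (-(n * (s / √n - log (1 + s / √n)))) / (1 + s / √n)) atTop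
      (𝓝 (exp (-(s ^ 2 / 2)) / (1 + 0))) := hexp.neg.rexp.div (hv.const_add 1) (by norm_num)
  rw [add_zero, div_one, show -(s ^ 2 / 2) = -(1 / 2) * s ^ 2 by ring] at h
  exact h.congr' (eventually_ne_atTop 0 |>.mono fun n hn ↦ (rescaledGammaDensity_eq hn hs).symm)

lemma tendsto_integral_rescaledGammaDensity :
    Tendsto (fun n ↦ ∫ s in Ioi 0, rescaledGammaDensity n s) atTop (𝓝 (√(π / 2))) := by
  have hval : √(π / (1 / 2)) / 2 = √(π / 2) := by
    rw [show π / (1 / 2) = 2 ^ 2 * (π / 2) by ring, sqrt_mul (by positivity), sqrt_sq two_pos.le]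
    ring
  rw [← hval, ← integral_gaussian_Ioi]
  refine tendsto_integral_filter_of_dominated_convergence
    (fun s ↦ exp (1 / 2) * exp (-(1 / 2) * s)) (Eventually.of_forall fun n ↦ ?_)
    (eventually_ne_atTop 0 |>.mono fun n hn ↦ ?_)
    ((exp_neg_integrableOn_Ioi 0 (by norm_num)).const_mul _) ?_
  · have hcont : Continuous (rescaledGammaDensity n) := by unfold rescaledGammaDensity; fun_prop
    exact hcont.aestronglyMeasurable
  · refine (ae_restrict_iff' measurableSet_Ioi).mpr (ae_of_all _ fun s hs ↦ ?_)
    have hs : 0 ≤ s := le_of_lt hs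
    rw [norm_of_nonneg (by unfold rescaledGammaDensity; positivity)]
    exact rescaledGammaDensity_le hn hs
  · exact (ae_restrict_iff' measurableSet_Ioi).mpr
      (ae_of_all _ fun s hs ↦ tendsto_rescaledGammaDensity (le_of_lt hs))

end rescaledGammaDensity

lemma exp_neg_mul_eN_self_eq {n : ℕ} (hn : n ≠ 0) :
    exp (-n) * eN n n
      = (∫ s in Ioi 0, rescaledGammaDensity n s) / (√2 * Stirling.stirlingSeq n) := by
  obtain ⟨m, rfl⟩ := exists_eq_add_one_of_ne_zero hn
  have hc : (0 : ℝ) < (m + 1 : ℕ) := by positivity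
  rw [← integral_Ioi_pow_mul_exp_neg_div_factorial m hc.le, integral_div,
    integral_Ioi_pow_mul_exp_neg_eq m hc, Stirling.stirlingSeq, sqrt_mul two_pos.le, div_pow,
    ← exp_nat_mul, mul_one, factorial_succ]
  simp only [rescaledGammaDensity, add_tsub_cancel_right, cast_mul]
  generalize ∫ s in Ioi 0, (1 + s / √((m + 1 : ℕ) : ℝ)) ^ m * exp (-(√((m + 1 : ℕ) : ℝ) * s)) = I
  generalize ((m + 1 : ℕ) : ℝ) = c at hc ⊢
  field_simp
  rw [exp_neg]
  field_simp
  ring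

lemma tendsto_exp_neg_mul_eN_self :
    Tendsto (fun n : ℕ ↦ exp (-n) * eN n n) atTop (𝓝 (1 / 2)) := by
  have h := tendsto_integral_rescaledGammaDensity.div
    (Stirling.tendsto_stirlingSeq_sqrt_pi.const_mul √2) (by positivity)
  have hval : √(π / 2) / (√2 * √π) = 1 / 2 := by
    rw [sqrt_div' _ two_pos.le]
    field_simp
    rw [sq_sqrt two_pos.le]
  rw [hval] at h
  exact h.congr' (eventually_ne_atTop 0 |>.mono fun n hn ↦ (exp_neg_mul_eN_self_eq hn).symm)

/-- For every `r ≥ 0`, `e^{-Nr²} e_N(Nr²) → 𝟙_{r<1} + (1/2)𝟙_{r=1}` as `N → ∞`;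
in particular `e^{-N} ∑_{ℓ=0}^{N-1} Nˡ/ℓ! → 1/2`. -/
theorem stmt19 :
    (∀ r : ℝ, 0 ≤ r →
      Tendsto (fun N : ℕ => Real.exp (-(N : ℝ) * r ^ 2) * eN N ((N : ℝ) * r ^ 2)) atTop
        (nhds (if r < 1 then 1 else if r = 1 then 1 / 2 else 0)))
    ∧ Tendsto
        (fun N : ℕ => Real.exp (-(N : ℝ)) * ∑ ℓ ∈ Finset.range N, (N : ℝ) ^ ℓ / (Nat.factorial ℓ))
        atTop (nhds (1 / 2)) := by
  refine ⟨fun r hr ↦ ?_, tendsto_exp_neg_mul_eN_self⟩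
  rcases lt_trichotomy r 1 with hr1 | rfl | hr1
  · rw [if_pos hr1]
    exact tendsto_exp_neg_mul_eN_of_lt_one (sq_nonneg r) (pow_lt_one₀ hr hr1 two_ne_zero)
  · simpa using tendsto_exp_neg_mul_eN_self
  · rw [if_neg hr1.not_gt, if_neg hr1.ne']
    exact tendsto_exp_neg_mul_eN_of_one_lt (one_lt_pow₀ hr1 two_ne_zero)
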